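/- Let k ≥ 1 and j ≥ 1 be integers and let F : 𝔽₂ʲ → 𝔽₂ be a Boolean function. For n ≥ 1 define A_n = Σ_{l=0}^{n} ( Σ_{m=0}^{j} C_m(F)(-1)^{C(l+m,2k)} ) C(n,l) and B_n = Σ_{l=0}^{n+1} ( Σ_{m=0}^{j} C_m(F)(-1)^{C(l+m,2k+1)} ) C(n+1,l), so that A_n = S(σ_{n+j,2k} + F) and B_n = S(σ_{n+1+j,2k+1} + F) whenever these Boolean functions are defined. Then A_n = B_n for every positive integer n if and only if F is balanced, i.e. S(F) = 0. -/

import Mathlib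

/-- Exponential sum of a Boolean function in `N` variables. -/
def expSum {N : ℕ} (G : (Fin N → ZMod 2) → ZMod 2) : ℤ :=
  ∑ x : Fin N → ZMod 2, (-1 : ℤ) ^ (G x).val

/-- Elementary symmetric Boolean polynomial of degree `k` in `n` variables. -/
def sigma (n k : ℕ) (x : Fin n → ZMod 2) : ZMod 2 :=
  ∑ A ∈ Finset.powersetCard k (Finset.univ : Finset (Fin n)), ∏ i ∈ A, x i

/-- Hamming weight of a Boolean vector. -/
def wt {j : ℕ} (x : Fin j → ZMod 2) : ℕ :=
  (Finset.univ.filter (fun i => x i = 1)).card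

/-- The weight-coefficients `C_m(F) = Σ_{wt(x)=m} (-1)^{F(x)}` of a Boolean function. -/
def coefC {j : ℕ} (F : (Fin j → ZMod 2) → ZMod 2) (m : ℕ) : ℤ :=
  ∑ x ∈ Finset.univ.filter (fun x : Fin j → ZMod 2 => wt x = m), (-1 : ℤ) ^ (F x).val

/-!
Splitting the variables into the `j` variables of `F` and `n` free ones, and using
`σ_{N,d}(x) = C(wt x, d) mod 2`, both exponential sums become weight sums
`Σ_l C(n,l) Σ_m C_m(F) (-1)^{C(l+m,d)}`. Pascal's rule for `C(n+1,l)` together with the parity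
identity `(-1)^{C(t,2k+1)} + (-1)^{C(t+1,2k+1)} = 1 + (-1)^{C(t,2k)}` (if `C(t,2k+1)` is odd, so is
`C(t,2k)`) gives `B_n = A_n + 2^n S(F)`.
-/

open Finset

lemma neg_one_pow_val_add (a b : ZMod 2) :
    (-1 : ℤ) ^ (a + b).val = (-1) ^ a.val * (-1) ^ b.val := by
  revert a b; decide

lemma neg_one_pow_val_natCast (c : ℕ) : (-1 : ℤ) ^ (c : ZMod 2).val = (-1) ^ c := by
  rw [ZMod.val_natCast, ← neg_one_pow_eq_pow_mod_two]

lemma ZMod.two_eq_ite (a : ZMod 2) : a = if a = 1 then 1 else 0 := by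
  revert a; decide

section Weight

variable {N : ℕ}

lemma wt_le (x : Fin N → ZMod 2) : wt x ≤ N :=
  (card_filter_le _ _).trans_eq (card_fin N)

lemma wt_append {j n : ℕ} (y : Fin j → ZMod 2) (z : Fin n → ZMod 2) :
    wt (Fin.append y z) = wt y + wt z := by
  simp only [wt, card_filter, Fin.sum_univ_add, Fin.append_left, Fin.append_right]

lemma sigma_eq_choose_wt (d : ℕ) (x : Fin N → ZMod 2) : sigma N d x = (wt x).choose d := by
  have hprod : ∀ A : Finset (Fin N),
      ∏ i ∈ A, x i = if A ⊆ univ.filter (x · = 1) then 1 else 0 := fun A => by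
    rw [prod_congr rfl fun i _ => ZMod.two_eq_ite (x i), prod_boole]
    simp [subset_iff]
  have hsubsets : (powersetCard d univ).filter (· ⊆ univ.filter (x · = 1)) =
      powersetCard d (univ.filter (x · = 1)) := by
    ext A
    simp [mem_powersetCard, and_comm]
  rw [sigma, sum_congr rfl fun A _ => hprod A, sum_boole, hsubsets, card_powersetCard, wt]

lemma card_filter_wt_eq (l : ℕ) : #{x : Fin N → ZMod 2 | wt x = l} = N.choose l := by
  rw [show N.choose l = #(powersetCard l (univ : Finset (Fin N))) by simp]
  refine card_nbij' (fun x => univ.filter (x · = 1)) (fun A i => if i ∈ A then 1 else 0)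
    ?_ ?_ ?_ ?_
  · intro x hx
    rw [mem_coe, mem_filter] at hx
    exact mem_coe.mpr (mem_powersetCard.mpr ⟨subset_univ _, hx.2⟩)
  · intro A hA
    rw [mem_coe, mem_powersetCard] at hA
    rw [mem_coe, mem_filter]
    simpa [wt] using hA.2
  · intro x _
    funext i
    simpa using (ZMod.two_eq_ite (x i)).symm
  · intro A _
    ext i
    simp

lemma sum_eq_sum_range_sum_wt {M : Type*} [AddCommMonoid M] (f : (Fin N → ZMod 2) → M) :
    ∑ x, f x = ∑ m ∈ range (N + 1), ∑ x with wt x = m, f x :=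
  (sum_fiberwise_of_maps_to (fun x _ => mem_range_succ_iff.mpr (wt_le x)) f).symm

lemma sum_comp_wt {M : Type*} [AddCommMonoid M] (g : ℕ → M) :
    ∑ x : Fin N → ZMod 2, g (wt x) = ∑ l ∈ range (N + 1), N.choose l • g l := by
  rw [sum_eq_sum_range_sum_wt]
  refine sum_congr rfl fun l _ => ?_
  rw [sum_congr rfl fun x hx => congrArg g (mem_filter.mp hx).2, sum_const, card_filter_wt_eq]

lemma sum_wt_castLE {M : Type*} [AddCommMonoid M] {j n : ℕ} (h : j + n = N) (hle : j ≤ N)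
    (f : ℕ → (Fin j → ZMod 2) → M) :
    ∑ x : Fin N → ZMod 2, f (wt x) (fun i => x (Fin.castLE hle i)) =
      ∑ y : Fin j → ZMod 2, ∑ l ∈ range (n + 1), n.choose l • f (wt y + l) y := by
  subst h
  rw [← (Fin.appendEquiv j n).sum_comp, Fintype.sum_prod_type]
  refine sum_congr rfl fun y _ => ?_
  have hleft : ∀ z : Fin n → ZMod 2, (fun i => Fin.append y z (Fin.castLE hle i)) = y :=
    fun z => funext fun i => Fin.append_left y z i
  change ∑ z, f (wt (Fin.append y z)) (fun i => Fin.append y z (Fin.castLE hle i)) = _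
  simp only [hleft, wt_append]
  exact sum_comp_wt fun w => f (wt y + w) y

end Weight

section CoefC

variable {j : ℕ} (F : (Fin j → ZMod 2) → ZMod 2)

lemma sum_wt_mul_neg_one_pow (g : ℕ → ℤ) :
    ∑ y : Fin j → ZMod 2, g (wt y) * (-1) ^ (F y).val = ∑ m ∈ range (j + 1), coefC F m * g m := by
  rw [sum_eq_sum_range_sum_wt]
  refine sum_congr rfl fun m _ => ?_
  rw [coefC, sum_mul]
  exact sum_congr rfl fun y hy => by rw [(mem_filter.mp hy).2, mul_comm]

lemma expSum_eq_sum_coefC : expSum F = ∑ m ∈ range (j + 1), coefC F m := by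
  simpa [expSum] using sum_wt_mul_neg_one_pow F fun _ => 1

def weightSum (d n : ℕ) : ℤ :=
  ∑ l ∈ range (n + 1),
    (∑ m ∈ range (j + 1), coefC F m * (-1 : ℤ) ^ Nat.choose (l + m) d) * (n.choose l : ℤ)

theorem expSum_sigma_add_eq_weightSum (n d : ℕ) :
    expSum (fun x : Fin (n + j) → ZMod 2 =>
        sigma (n + j) d x + F (fun i => x (Fin.castLE (Nat.le_add_left j n) i))) =
      weightSum F d n := by
  rw [expSum]
  simp_rw [neg_one_pow_val_add, sigma_eq_choose_wt, neg_one_pow_val_natCast]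
  refine (sum_wt_castLE (add_comm j n) _ fun w y => (-1 : ℤ) ^ w.choose d * (-1) ^ (F y).val).trans ?_
  rw [sum_comm]
  refine sum_congr rfl fun l _ => ?_
  rw [← sum_wt_mul_neg_one_pow, sum_mul]
  refine sum_congr rfl fun y _ => ?_
  rw [nsmul_eq_mul, add_comm l]
  ring

end CoefC

lemma Nat.odd_choose_of_odd_choose_succ {t i : ℕ} (hi : Even i) (h : Odd (t.choose (i + 1))) :
    Odd (t.choose i) := by
  have hodd : Odd (t.choose (i + 1) * (i + 1)) := h.mul hi.add_one
  rw [Nat.choose_succ_right_eq] at hodd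
  exact (Nat.odd_mul.mp hodd).1

lemma neg_one_pow_choose_add_neg_one_pow_choose_succ {i : ℕ} (hi : Even i) (t : ℕ) :
    (-1 : ℤ) ^ t.choose (i + 1) + (-1) ^ (t + 1).choose (i + 1) = 1 + (-1) ^ t.choose i := by
  rw [Nat.choose_succ_succ', pow_add]
  rcases Nat.even_or_odd (t.choose (i + 1)) with he | ho
  · rw [he.neg_one_pow]
    ring
  · rw [ho.neg_one_pow, (Nat.odd_choose_of_odd_choose_succ hi ho).neg_one_pow]
    ring

lemma sum_range_mul_choose_succ {R : Type*} [NonAssocSemiring R] (f : ℕ → R) (n : ℕ) :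
    ∑ l ∈ range (n + 2), f l * ((n + 1).choose l : R) =
      ∑ l ∈ range (n + 1), (f l + f (l + 1)) * (n.choose l : R) := by
  have hshift : ∑ l ∈ range (n + 1), f (l + 1) * (n.choose (l + 1) : R) + f 0 =
      ∑ l ∈ range (n + 1), f l * (n.choose l : R) := by
    have h := sum_range_succ' (fun l => f l * (n.choose l : R)) (n + 1)
    rw [sum_range_succ, Nat.choose_succ_self] at h
    simpa using h.symm
  calc ∑ l ∈ range (n + 2), f l * ((n + 1).choose l : R)
      = ∑ l ∈ range (n + 1), f (l + 1) * (n.choose l : R) +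
          (∑ l ∈ range (n + 1), f (l + 1) * (n.choose (l + 1) : R) + f 0) := by
        rw [sum_range_succ']
        simp [Nat.choose_succ_succ', mul_add, sum_add_distrib, add_assoc]
    _ = ∑ l ∈ range (n + 1), (f l + f (l + 1)) * (n.choose l : R) := by
        rw [hshift, ← sum_add_distrib]
        exact sum_congr rfl fun l _ => by rw [add_mul, add_comm]

theorem weightSum_succ {j i : ℕ} (hi : Even i) (F : (Fin j → ZMod 2) → ZMod 2) (n : ℕ) :
    weightSum F (i + 1) (n + 1) = weightSum F i n + 2 ^ n * expSum F := by
  have hpair : ∀ l, ∑ m ∈ range (j + 1), coefC F m * (-1 : ℤ) ^ (l + m).choose (i + 1) +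
      ∑ m ∈ range (j + 1), coefC F m * (-1 : ℤ) ^ (l + 1 + m).choose (i + 1) =
      expSum F + ∑ m ∈ range (j + 1), coefC F m * (-1 : ℤ) ^ (l + m).choose i := fun l => by
    rw [expSum_eq_sum_coefC, ← sum_add_distrib, ← sum_add_distrib]
    refine sum_congr rfl fun m _ => ?_
    rw [add_right_comm l 1 m, ← mul_add, neg_one_pow_choose_add_neg_one_pow_choose_succ hi]
    ring
  rw [weightSum, sum_range_mul_choose_succ, sum_congr rfl fun l _ => by rw [hpair l]]
  rw [sum_congr rfl fun l _ => add_mul _ _ _, sum_add_distrib, ← mul_sum, ← Nat.cast_sum,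
    Nat.sum_range_choose, weightSum]
  push_cast
  ring

theorem perturbation_shift_iff_balanced_general
    (k j : ℕ)
    (F : (Fin j → ZMod 2) → ZMod 2)
    (A B : ℕ → ℤ)
    (hA : ∀ n : ℕ, A n =
      ∑ l ∈ Finset.range (n + 1),
        (∑ m ∈ Finset.range (j + 1),
          coefC F m * (-1 : ℤ) ^ Nat.choose (l + m) (2 * k)) * (n.choose l : ℤ))
    (hB : ∀ n : ℕ, B n =
      ∑ l ∈ Finset.range (n + 2),
        (∑ m ∈ Finset.range (j + 1),
          coefC F m * (-1 : ℤ) ^ Nat.choose (l + m) (2 * k + 1)) *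
            ((n + 1).choose l : ℤ)) :
    (∀ n : ℕ, 2 * k ≤ n + j →
      A n = expSum (fun x : Fin (n + j) → ZMod 2 =>
          sigma (n + j) (2 * k) x + F (fun i => x (Fin.castLE (Nat.le_add_left j n) i))) ∧
      B n = expSum (fun x : Fin (n + 1 + j) → ZMod 2 =>
          sigma (n + 1 + j) (2 * k + 1) x +
            F (fun i => x (Fin.castLE (Nat.le_add_left j (n + 1)) i)))) ∧
    ((∀ n : ℕ, 1 ≤ n → A n = B n) ↔ expSum F = 0) := by
  have hA' : ∀ n, A n = weightSum F (2 * k) n := hA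
  have hB' : ∀ n, B n = weightSum F (2 * k + 1) (n + 1) := hB
  have hBA : ∀ n, B n = A n + 2 ^ n * expSum F := fun n => by
    rw [hA', hB', weightSum_succ (even_two_mul k)]
  refine ⟨fun n _ => ⟨?_, ?_⟩, ⟨fun hAB => ?_, fun hS n _ => by rw [hBA, hS, mul_zero, add_zero]⟩⟩
  · rw [hA', expSum_sigma_add_eq_weightSum]
  · rw [hB', expSum_sigma_add_eq_weightSum]
  · have h1 := hBA 1
    rw [← hAB 1 le_rfl] at h1
    linarith

/-- With `A_n = Σ_{l=0}^n (Σ_m C_m(F)(-1)^{C(l+m,2k)}) C(n,l)` and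
`B_n = Σ_{l=0}^{n+1} (Σ_m C_m(F)(-1)^{C(l+m,2k+1)}) C(n+1,l)`, so that
`A_n = S(σ_{n+j,2k}+F)` and `B_n = S(σ_{n+1+j,2k+1}+F)` whenever these are defined,
one has `A_n = B_n` for every positive `n` if and only if `F` is balanced. -/
theorem perturbation_shift_iff_balanced
    (k j : ℕ) (hk : 1 ≤ k) (hj : 1 ≤ j)
    (F : (Fin j → ZMod 2) → ZMod 2)
    (A B : ℕ → ℤ)
    (hA : ∀ n : ℕ, A n =
      ∑ l ∈ Finset.range (n + 1),
        (∑ m ∈ Finset.range (j + 1),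
          coefC F m * (-1 : ℤ) ^ Nat.choose (l + m) (2 * k)) * (n.choose l : ℤ))
    (hB : ∀ n : ℕ, B n =
      ∑ l ∈ Finset.range (n + 2),
        (∑ m ∈ Finset.range (j + 1),
          coefC F m * (-1 : ℤ) ^ Nat.choose (l + m) (2 * k + 1)) *
            ((n + 1).choose l : ℤ)) :
    (∀ n : ℕ, 2 * k ≤ n + j →
      A n = expSum (fun x : Fin (n + j) → ZMod 2 =>
          sigma (n + j) (2 * k) x + F (fun i => x (Fin.castLE (Nat.le_add_left j n) i))) ∧
      B n = expSum (fun x : Fin (n + 1 + j) → ZMod 2 =>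
          sigma (n + 1 + j) (2 * k + 1) x +
            F (fun i => x (Fin.castLE (Nat.le_add_left j (n + 1)) i)))) ∧
    ((∀ n : ℕ, 1 ≤ n → A n = B n) ↔ expSum F = 0) :=
  perturbation_shift_iff_balanced_general k j F A B hA hB
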